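/- Forward criterion (Sheeran et al.): let φ₀ = ι and φ_{i+1} = post(φ_i). If φ_i ⊆ α for all 0 ≤ i ≤ k (bounded safety up to k) and φ_{k+1} ⊆ φ₀ ∪ φ₁ ∪ ... ∪ φ_k (every state of distance k+1 already appears at smaller distance, i.e., the set of distance-(k+1) states is empty), then every reachable state satisfies α. -/

import Mathlib

/-!
The union `U = φ 0 ∪ ⋯ ∪ φ k` is an inductive invariant: a successor of a state in `φ i` lies in
`φ (i + 1)`, which is part of `U` for `i < k` and contained in `U` by the criterion for `i = k`.
Since `U` contains the initial states, every reachable state is in `U`, and `U ⊆ α` by bounded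
safety.
-/

def IsForwardClosed {D : Type*} (τ : D → D → Prop) (U : Set D) : Prop :=
  ∀ x ∈ U, ∀ y, τ x y → y ∈ U

theorem IsForwardClosed.path_mem {D : Type*} {τ : D → D → Prop} {U : Set D}
    (hU : IsForwardClosed τ U) {p : ℕ → D} {n : ℕ} (h0 : p 0 ∈ U)
    (hstep : ∀ i < n, τ (p i) (p (i + 1))) : p n ∈ U := by
  induction n with
  | zero => exact h0
  | succ n ih =>
    exact hU _ (ih fun i hi => hstep i (by omega)) _ (hstep n n.lt_succ_self)

theorem isForwardClosed_biUnion_range {D : Type*} {τ : D → D → Prop} {φ : ℕ → Set D}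
    (hφs : ∀ i, φ (i + 1) = {y | ∃ x ∈ φ i, τ x y}) {k : ℕ}
    (hcrit : φ (k + 1) ⊆ ⋃ i ∈ Finset.range (k + 1), φ i) :
    IsForwardClosed τ (⋃ i ∈ Finset.range (k + 1), φ i) := by
  intro x hx y hxy
  simp only [Set.mem_iUnion, Finset.mem_range, exists_prop] at hx
  obtain ⟨i, hi, hxi⟩ := hx
  have hy : y ∈ φ (i + 1) := by rw [hφs]; exact ⟨x, hxi, hxy⟩
  rcases (Nat.lt_succ_iff.mp hi).lt_or_eq with hik | rfl
  · exact Set.mem_biUnion (Finset.mem_range.mpr (by omega)) hy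
  · exact hcrit hy

theorem stmt_10 {D : Type*} (ι : Set D) (τ : D → D → Prop) (α : Set D)
    (φ : ℕ → Set D) (hφ0 : φ 0 = ι)
    (hφs : ∀ i, φ (i + 1) = {y | ∃ x ∈ φ i, τ x y})
    (k : ℕ)
    (hbounded : ∀ i ≤ k, φ i ⊆ α)
    (hcrit : φ (k + 1) ⊆ ⋃ i ∈ Finset.range (k + 1), φ i) :
    ∀ y : D, (∃ (n : ℕ) (p : ℕ → D),
      p 0 ∈ ι ∧ (∀ i < n, τ (p i) (p (i + 1))) ∧ p n = y) → y ∈ α := by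
  rintro y ⟨n, p, h0, hstep, rfl⟩
  have hsafe : ⋃ i ∈ Finset.range (k + 1), φ i ⊆ α :=
    Set.iUnion₂_subset fun i hi => hbounded i (Nat.lt_succ_iff.mp (Finset.mem_range.mp hi))
  have hinit : p 0 ∈ ⋃ i ∈ Finset.range (k + 1), φ i :=
    Set.mem_biUnion (Finset.mem_range.mpr k.succ_pos) (hφ0 ▸ h0)
  exact hsafe ((isForwardClosed_biUnion_range hφs hcrit).path_mem hinit hstep)
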